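/- arXiv:2603.21407 — 3 statements merged into one kernel-verified Lean document; each statement's English description precedes it below -/
import Mathlib

section
/- Let (u_n) be a sequence in [0,1) and v ∈ [0,∞) such that (1-u_n)^n → e^{-v} as n → ∞. Then u_n → 0 and n·u_n → v. -/
/-!
Taking logarithms, `n * w n → v` for `w n = -log (1 - u n)`, so `w n → 0`. The elementary
bounds `(1 - u) * w ≤ u ≤ w` then squeeze `u n` to `0` and `n * u n` between
`(1 - u n) * (n * w n)` and `n * w n`, both of which tend to `v`.
-/

open Filter Real

lemma Real.le_neg_log_one_sub {u : ℝ} (hu : u < 1) : u ≤ -log (1 - u) := by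
  linarith [log_le_sub_one_of_pos (sub_pos.mpr hu)]

lemma Real.one_sub_mul_neg_log_one_sub_le {u : ℝ} (hu : u < 1) :
    (1 - u) * -log (1 - u) ≤ u := by
  have hpos : 0 < 1 - u := sub_pos.mpr hu
  have h := one_sub_inv_le_log_of_pos hpos
  calc (1 - u) * -log (1 - u) ≤ (1 - u) * ((1 - u)⁻¹ - 1) :=
        mul_le_mul_of_nonneg_left (by linarith) hpos.le
    _ = u := by field_simp; ring

lemma tendsto_natCast_mul_log_of_tendsto_pow {x : ℕ → ℝ} {a : ℝ}
    (h : Tendsto (fun n => x n ^ n) atTop (nhds (exp a))) :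
    Tendsto (fun n : ℕ => (n : ℝ) * log (x n)) atTop (nhds a) := by
  have hlog := (continuousAt_log (exp_pos a).ne').tendsto.comp h
  simpa only [Function.comp_def, log_pow, log_exp] using hlog

lemma tendsto_zero_of_tendsto_natCast_mul {w : ℕ → ℝ} {L : ℝ}
    (h : Tendsto (fun n : ℕ => (n : ℝ) * w n) atTop (nhds L)) :
    Tendsto w atTop (nhds 0) := by
  have hmul := h.mul (tendsto_inv_atTop_zero.comp tendsto_natCast_atTop_atTop)
  rw [mul_zero] at hmul
  refine hmul.congr' ?_
  filter_upwards [eventually_ne_atTop 0] with n hn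
  have hn0 : (n : ℝ) ≠ 0 := Nat.cast_ne_zero.mpr hn
  simp only [Function.comp_apply]
  field_simp

theorem stmt0_general (u : ℕ → ℝ) (v : ℝ)
    (hu : ∀ n, u n ∈ Set.Ico (0 : ℝ) 1)
    (h : Tendsto (fun n => (1 - u n) ^ n) atTop (nhds (Real.exp (-v)))) :
    Tendsto u atTop (nhds 0) ∧
      Tendsto (fun n : ℕ => (n : ℝ) * u n) atTop (nhds v) := by
  set w : ℕ → ℝ := fun n => -log (1 - u n)
  have hnw : Tendsto (fun n : ℕ => (n : ℝ) * w n) atTop (nhds v) := by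
    simpa [w] using (tendsto_natCast_mul_log_of_tendsto_pow h).neg
  have hw : Tendsto w atTop (nhds 0) := tendsto_zero_of_tendsto_natCast_mul hnw
  have hu0 : Tendsto u atTop (nhds 0) :=
    squeeze_zero (fun n => (hu n).1) (fun n => le_neg_log_one_sub (hu n).2) hw
  refine ⟨hu0, ?_⟩
  have hlower : Tendsto (fun n : ℕ => (1 - u n) * ((n : ℝ) * w n)) atTop (nhds v) := by
    simpa using ((tendsto_const_nhds (x := (1 : ℝ))).sub hu0).mul hnw
  refine tendsto_of_tendsto_of_tendsto_of_le_of_le hlower hnw (fun n => ?_) (fun n => ?_)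
  · calc (1 - u n) * ((n : ℝ) * w n) = (n : ℝ) * ((1 - u n) * w n) := by ring
      _ ≤ (n : ℝ) * u n :=
        mul_le_mul_of_nonneg_left (one_sub_mul_neg_log_one_sub_le (hu n).2) n.cast_nonneg
  · exact mul_le_mul_of_nonneg_left (le_neg_log_one_sub (hu n).2) n.cast_nonneg

theorem stmt0 (u : ℕ → ℝ) (v : ℝ)
    (hu : ∀ n, u n ∈ Set.Ico (0 : ℝ) 1) (hv : 0 ≤ v)
    (h : Tendsto (fun n => (1 - u n) ^ n) atTop (nhds (Real.exp (-v)))) :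
    Tendsto u atTop (nhds 0) ∧
      Tendsto (fun n : ℕ => (n : ℝ) * u n) atTop (nhds v) :=
  stmt0_general u v hu h
end

section
/- Let p ≥ 1. Let U₁, U₂ be real random variables with laws μ₁, μ₂ having finite p-th moments, and let V be a random variable with values in a measurable space 𝒱, independent of (U₁,U₂). Let φ : ℝ × 𝒱 → ℝ be measurable with |φ(u,v) - φ(u',v)| ≤ L(v)·|u - u'| for all u,u',v, where L : 𝒱 → [0,∞) is measurable with E[L(V)^p] < ∞. Then W_p(law(φ(U₁,V)), law(φ(U₂,V))) ≤ (E[L(V)^p])^{1/p} · W_p(μ₁, μ₂). -/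
/-!
If `P` couples `μ₁` and `μ₂` and `V ∼ ν` is drawn independently, then pushing `P ⊗ ν` through
`(u₁, u₂, v) ↦ (φ(u₁, v), φ(u₂, v))` couples the two laws `(μᵢ ⊗ ν).map φ`. Its cost is bounded
pointwise by `L(v)ᵖ |u₁ - u₂|ᵖ`, whose integral factorizes over the product measure as
`E[L(V)ᵖ] · cost(P)`. Taking the infimum over `P` gives the bound.
-/

open MeasureTheory Real

/-- Wasserstein-`p` distance on `ℝ`, defined as the infimum over couplings of the
`p`-th root of the transport cost. -/
noncomputable def Wp (p : ℝ) (μ ν : Measure ℝ) : ℝ :=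
  sInf {c : ℝ | ∃ P : Measure (ℝ × ℝ), IsProbabilityMeasure P ∧
    P.map Prod.fst = μ ∧ P.map Prod.snd = ν ∧
    c = (∫ z, |z.1 - z.2| ^ p ∂P) ^ (1 / p)}

open ProbabilityTheory

/-- The Bochner integral is `0` for a non-integrable cost, which is why the bounds below need
`integrable_transportCost`. -/
noncomputable def transportCost (p : ℝ) (P : Measure (ℝ × ℝ)) : ℝ :=
  ∫ z, |z.1 - z.2| ^ p ∂P

lemma transportCost_nonneg (p : ℝ) (P : Measure (ℝ × ℝ)) : 0 ≤ transportCost p P :=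
  integral_nonneg fun _ => rpow_nonneg (abs_nonneg _) p

lemma Wp_le_of_coupling {p : ℝ} {μ ν : Measure ℝ} (P : Measure (ℝ × ℝ)) [IsProbabilityMeasure P]
    (h₁ : P.map Prod.fst = μ) (h₂ : P.map Prod.snd = ν) :
    Wp p μ ν ≤ transportCost p P ^ (1 / p) :=
  csInf_le ⟨0, by rintro _ ⟨Q, -, -, -, rfl⟩; exact rpow_nonneg (transportCost_nonneg p Q) _⟩
    ⟨P, ‹_›, h₁, h₂, rfl⟩

lemma le_mul_Wp {p K a : ℝ} {μ ν : Measure ℝ} [IsProbabilityMeasure μ] [IsProbabilityMeasure ν]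
    (hK : 0 ≤ K)
    (h : ∀ P : Measure (ℝ × ℝ), IsProbabilityMeasure P → P.map Prod.fst = μ →
      P.map Prod.snd = ν → a ≤ K * transportCost p P ^ (1 / p)) :
    a ≤ K * Wp p μ ν := by
  have hne : (μ.prod ν).map Prod.fst = μ ∧ (μ.prod ν).map Prod.snd = ν := by simp
  rw [Wp, ← smul_eq_mul, ← Real.sInf_smul_of_nonneg hK]
  refine le_csInf (Set.Nonempty.smul_set ⟨_, μ.prod ν, inferInstance, hne.1, hne.2, rfl⟩) ?_
  rintro _ ⟨_, ⟨P, hP, h₁, h₂, rfl⟩, rfl⟩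
  exact h P hP h₁ h₂

lemma integrable_transportCost {p : ℝ} (hp : 0 < p) {P : Measure (ℝ × ℝ)}
    (h₁ : Integrable (fun u => |u| ^ p) (P.map Prod.fst))
    (h₂ : Integrable (fun u => |u| ^ p) (P.map Prod.snd)) :
    Integrable (fun z : ℝ × ℝ => |z.1 - z.2| ^ p) P := by
  have hp' : ENNReal.ofReal p ≠ 0 := by simpa using hp
  have memLp {f : ℝ × ℝ → ℝ} (hf : Measurable f) (h : Integrable (fun u => |u| ^ p) (P.map f)) :
      MemLp f (ENNReal.ofReal p) P :=
    (memLp_map_measure_iff aestronglyMeasurable_id hf.aemeasurable).mp <|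
      (integrable_norm_rpow_iff aestronglyMeasurable_id hp' ENNReal.ofReal_ne_top).mp <| by
        simpa [ENNReal.toReal_ofReal hp.le] using h
  simpa [ENNReal.toReal_ofReal hp.le] using
    ((memLp measurable_fst h₁).sub (memLp measurable_snd h₂)).integrable_norm_rpow hp'
      ENNReal.ofReal_ne_top

lemma nonneg_of_abs_sub_le_mul_abs_sub {𝒱 : Type*} {φ : ℝ × 𝒱 → ℝ} {L : 𝒱 → ℝ}
    (hLip : ∀ (u u' : ℝ) (v : 𝒱), |φ (u, v) - φ (u', v)| ≤ L v * |u - u'|) (v : 𝒱) : 0 ≤ L v := by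
  simpa using (abs_nonneg _).trans (hLip 1 0 v)

section LiftCoupling

variable {𝒱 : Type*} [MeasurableSpace 𝒱]

noncomputable def liftCoupling (φ : ℝ × 𝒱 → ℝ) (P : Measure (ℝ × ℝ)) (ν : Measure 𝒱) :
    Measure (ℝ × ℝ) :=
  (P.prod ν).map fun x => (φ (x.1.1, x.2), φ (x.1.2, x.2))

variable {φ : ℝ × 𝒱 → ℝ} {P : Measure (ℝ × ℝ)} {ν : Measure 𝒱}

lemma measurable_liftCoupling_map (hφ : Measurable φ) :
    Measurable fun x : (ℝ × ℝ) × 𝒱 => (φ (x.1.1, x.2), φ (x.1.2, x.2)) := by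
  fun_prop

lemma isProbabilityMeasure_liftCoupling [IsProbabilityMeasure P] [IsProbabilityMeasure ν]
    (hφ : Measurable φ) : IsProbabilityMeasure (liftCoupling φ P ν) :=
  Measure.isProbabilityMeasure_map (measurable_liftCoupling_map hφ).aemeasurable

lemma map_fst_liftCoupling [SFinite P] [SFinite ν] (hφ : Measurable φ) :
    (liftCoupling φ P ν).map Prod.fst = ((P.map Prod.fst).prod ν).map φ := by
  rw [liftCoupling, Measure.map_map measurable_fst (measurable_liftCoupling_map hφ),
    ← Measure.map_id (μ := ν), Measure.map_prod_map _ _ measurable_fst measurable_id,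
    Measure.map_id, Measure.map_map hφ (measurable_fst.prodMap measurable_id)]
  rfl

lemma map_snd_liftCoupling [SFinite P] [SFinite ν] (hφ : Measurable φ) :
    (liftCoupling φ P ν).map Prod.snd = ((P.map Prod.snd).prod ν).map φ := by
  rw [liftCoupling, Measure.map_map measurable_snd (measurable_liftCoupling_map hφ),
    ← Measure.map_id (μ := ν), Measure.map_prod_map _ _ measurable_snd measurable_id,
    Measure.map_id, Measure.map_map hφ (measurable_snd.prodMap measurable_id)]
  rfl

lemma transportCost_liftCoupling_le [SFinite P] [SFinite ν] {p : ℝ} (hp : 0 ≤ p)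
    (hφ : Measurable φ) {L : 𝒱 → ℝ}
    (hLip : ∀ (u u' : ℝ) (v : 𝒱), |φ (u, v) - φ (u', v)| ≤ L v * |u - u'|)
    (hP : Integrable (fun z : ℝ × ℝ => |z.1 - z.2| ^ p) P)
    (hL : Integrable (fun v => L v ^ p) ν) :
    transportCost p (liftCoupling φ P ν) ≤ transportCost p P * ∫ v, L v ^ p ∂ν := by
  rw [transportCost, transportCost, liftCoupling,
    integral_map (measurable_liftCoupling_map hφ).aemeasurable (by fun_prop), ← integral_prod_mul]
  refine integral_mono_of_nonneg (ae_of_all _ fun _ => by positivity) (hP.mul_prod hL)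
    (ae_of_all _ fun x => ?_)
  calc |φ (x.1.1, x.2) - φ (x.1.2, x.2)| ^ p ≤ (L x.2 * |x.1.1 - x.1.2|) ^ p :=
        rpow_le_rpow (abs_nonneg _) (hLip _ _ _) hp
    _ = |x.1.1 - x.1.2| ^ p * L x.2 ^ p := by
        rw [mul_rpow (nonneg_of_abs_sub_le_mul_abs_sub hLip _) (abs_nonneg _), mul_comm]

end LiftCoupling

theorem Wp_map_prod_le {𝒱 : Type*} [MeasurableSpace 𝒱] {p : ℝ} (hp : 0 < p)
    {μ₁ μ₂ : Measure ℝ} [IsProbabilityMeasure μ₁] [IsProbabilityMeasure μ₂]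
    {ν : Measure 𝒱} [IsProbabilityMeasure ν]
    (hμ₁ : Integrable (fun u => |u| ^ p) μ₁) (hμ₂ : Integrable (fun u => |u| ^ p) μ₂)
    {φ : ℝ × 𝒱 → ℝ} (hφ : Measurable φ) {L : 𝒱 → ℝ}
    (hLip : ∀ (u u' : ℝ) (v : 𝒱), |φ (u, v) - φ (u', v)| ≤ L v * |u - u'|)
    (hL : Integrable (fun v => L v ^ p) ν) :
    Wp p ((μ₁.prod ν).map φ) ((μ₂.prod ν).map φ) ≤ (∫ v, L v ^ p ∂ν) ^ (1 / p) * Wp p μ₁ μ₂ := by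
  have hL_nonneg : 0 ≤ ∫ v, L v ^ p ∂ν :=
    integral_nonneg fun v => rpow_nonneg (nonneg_of_abs_sub_le_mul_abs_sub hLip v) p
  refine le_mul_Wp (rpow_nonneg hL_nonneg _) fun P _ h₁ h₂ => ?_
  have := isProbabilityMeasure_liftCoupling (ν := ν) (P := P) hφ
  calc Wp p ((μ₁.prod ν).map φ) ((μ₂.prod ν).map φ)
      ≤ transportCost p (liftCoupling φ P ν) ^ (1 / p) :=
        Wp_le_of_coupling _ (by rw [map_fst_liftCoupling hφ, h₁])
          (by rw [map_snd_liftCoupling hφ, h₂])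
    _ ≤ (transportCost p P * ∫ v, L v ^ p ∂ν) ^ (1 / p) :=
        rpow_le_rpow (transportCost_nonneg p _) (transportCost_liftCoupling_le hp.le hφ hLip
          (integrable_transportCost hp (h₁ ▸ hμ₁) (h₂ ▸ hμ₂)) hL) (by positivity)
    _ = (∫ v, L v ^ p ∂ν) ^ (1 / p) * transportCost p P ^ (1 / p) := by
        rw [mul_rpow (transportCost_nonneg p P) hL_nonneg, mul_comm]

lemma ProbabilityTheory.IndepFun.map_comp_prodMk {Ω α β γ : Type*} [MeasurableSpace Ω]
    [MeasurableSpace α] [MeasurableSpace β] [MeasurableSpace γ] {μ : Measure Ω}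
    [IsFiniteMeasure μ] {X : Ω → α} {Y : Ω → β} (hXY : IndepFun X Y μ)
    (hX : Measurable X) (hY : Measurable Y) {φ : α × β → γ} (hφ : Measurable φ) :
    μ.map (fun ω => φ (X ω, Y ω)) = ((μ.map X).prod (μ.map Y)).map φ := by
  rw [← (indepFun_iff_map_prod_eq_prod_map_map hX.aemeasurable hY.aemeasurable).mp hXY,
    Measure.map_map hφ (hX.prodMk hY)]
  rfl

theorem stmt11_general {Ω : Type*} [MeasurableSpace Ω] (μ : Measure Ω) [IsProbabilityMeasure μ]
    {V' : Type*} [MeasurableSpace V']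
    (p : ℝ) (hp : 1 ≤ p)
    (U₁ U₂ : Ω → ℝ) (V : Ω → V')
    (hU₁ : Measurable U₁) (hU₂ : Measurable U₂) (hV : Measurable V)
    (hmom₁ : Integrable (fun ω => |U₁ ω| ^ p) μ)
    (hmom₂ : Integrable (fun ω => |U₂ ω| ^ p) μ)
    (hindep : IndepFun (fun ω => (U₁ ω, U₂ ω)) V μ)
    (φ : ℝ × V' → ℝ) (hφ : Measurable φ)
    (L : V' → ℝ) (hL : Measurable L)
    (hLip : ∀ (u u' : ℝ) (v : V'), |φ (u, v) - φ (u', v)| ≤ L v * |u - u'|)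
    (hLmom : Integrable (fun ω => L (V ω) ^ p) μ) :
    Wp p (μ.map fun ω => φ (U₁ ω, V ω)) (μ.map fun ω => φ (U₂ ω, V ω))
      ≤ (∫ ω, L (V ω) ^ p ∂μ) ^ (1 / p) * Wp p (μ.map U₁) (μ.map U₂) := by
  have : IsProbabilityMeasure (μ.map U₁) := Measure.isProbabilityMeasure_map hU₁.aemeasurable
  have : IsProbabilityMeasure (μ.map U₂) := Measure.isProbabilityMeasure_map hU₂.aemeasurable
  have : IsProbabilityMeasure (μ.map V) := Measure.isProbabilityMeasure_map hV.aemeasurable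
  have hUV₁ : IndepFun U₁ V μ := hindep.comp measurable_fst measurable_id
  have hUV₂ : IndepFun U₂ V μ := hindep.comp measurable_snd measurable_id
  rw [hUV₁.map_comp_prodMk hU₁ hV hφ, hUV₂.map_comp_prodMk hU₂ hV hφ,
    ← integral_map hV.aemeasurable (hL.pow_const p).aestronglyMeasurable]
  have habs : Measurable fun u : ℝ => |u| ^ p := measurable_id.abs.pow_const p
  exact Wp_map_prod_le (by linarith)
    ((integrable_map_measure habs.aestronglyMeasurable hU₁.aemeasurable).mpr hmom₁)
    ((integrable_map_measure habs.aestronglyMeasurable hU₂.aemeasurable).mpr hmom₂) hφ hLip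
    ((integrable_map_measure (hL.pow_const p).aestronglyMeasurable hV.aemeasurable).mpr hLmom)

theorem stmt11 {Ω : Type*} [MeasurableSpace Ω] (μ : Measure Ω) [IsProbabilityMeasure μ]
    {V' : Type*} [MeasurableSpace V']
    (p : ℝ) (hp : 1 ≤ p)
    (U₁ U₂ : Ω → ℝ) (V : Ω → V')
    (hU₁ : Measurable U₁) (hU₂ : Measurable U₂) (hV : Measurable V)
    (hmom₁ : Integrable (fun ω => |U₁ ω| ^ p) μ)
    (hmom₂ : Integrable (fun ω => |U₂ ω| ^ p) μ)
    (hindep : IndepFun (fun ω => (U₁ ω, U₂ ω)) V μ)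
    (φ : ℝ × V' → ℝ) (hφ : Measurable φ)
    (L : V' → ℝ) (hL : Measurable L) (hLpos : ∀ v, 0 ≤ L v)
    (hLip : ∀ (u u' : ℝ) (v : V'), |φ (u, v) - φ (u', v)| ≤ L v * |u - u'|)
    (hLmom : Integrable (fun ω => L (V ω) ^ p) μ) :
    Wp p (μ.map fun ω => φ (U₁ ω, V ω)) (μ.map fun ω => φ (U₂ ω, V ω))
      ≤ (∫ ω, L (V ω) ^ p ∂μ) ^ (1 / p) * Wp p (μ.map U₁) (μ.map U₂) :=
  stmt11_general μ p hp U₁ U₂ V hU₁ hU₂ hV hmom₁ hmom₂ hindep φ hφ L hL hLip hLmom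
end

section
/- Let P be a probability measure on a measurable space X and f : X → ℝ measurable with ∫ e^f dP < ∞ and ∫ |f| e^f dP < ∞. Define Q* by dQ*/dP = e^f / ∫ e^f dP. Then for every probability measure Q ≪ P with finite relative entropy D(Q‖P) and ∫|f| dQ < ∞, one has ∫ f dQ - D(Q‖P) ≤ log ∫ e^f dP, with equality when Q = Q*. -/
/-!
Tilting `P` by `e^f` gives the probability measure `Q* = P.tilted f`, and for `Q ≪ P` the
log-likelihood ratios differ by `llr Q Q* = llr Q P - f + log ∫ e^f dP`. Integrating against `Q`,
the gap `log ∫ e^f dP - (∫ f dQ - D(Q‖P))` is `D(Q‖Q*)`, which is nonnegative by Gibbs' inequality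
and vanishes at `Q = Q*`.
-/

open MeasureTheory Real

namespace MeasureTheory

variable {α : Type*} [MeasurableSpace α] {μ ν : Measure α} {f : α → ℝ}

lemma integral_llr_nonneg [IsProbabilityMeasure μ] [IsProbabilityMeasure ν] (hμν : μ ≪ ν)
    (h_int : Integrable (llr μ ν) μ) : 0 ≤ ∫ x, llr μ ν x ∂μ := by
  simpa using InformationTheory.integral_llr_add_sub_measure_univ_nonneg hμν h_int

lemma integral_sub_integral_llr_le_log_integral_exp [IsProbabilityMeasure μ] [SigmaFinite ν]
    (hμν : μ ≪ ν) (hfμ : Integrable f μ) (hfν : Integrable (fun x ↦ exp (f x)) ν)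
    (h_int : Integrable (llr μ ν) μ) :
    ∫ x, f x ∂μ - ∫ x, llr μ ν x ∂μ ≤ log (∫ x, exp (f x) ∂ν) := by
  have : NeZero ν := ⟨fun hν ↦ IsProbabilityMeasure.ne_zero μ
    (Measure.absolutelyContinuous_zero_iff.mp (hν ▸ hμν))⟩
  have : IsProbabilityMeasure (ν.tilted f) := isProbabilityMeasure_tilted hfν
  have h_gibbs : 0 ≤ ∫ x, llr μ (ν.tilted f) x ∂μ :=
    integral_llr_nonneg (hμν.trans (absolutelyContinuous_tilted hfν))
      (integrable_llr_tilted_right hμν hfμ h_int hfν)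
  rw [integral_llr_tilted_right hμν hfμ hfν h_int] at h_gibbs
  linarith

lemma integral_sub_integral_llr_tilted_self [SigmaFinite ν] [NeZero ν]
    (hfν : Integrable (fun x ↦ exp (f x)) ν) (hf : Integrable f (ν.tilted f)) :
    ∫ x, f x ∂(ν.tilted f) - ∫ x, llr (ν.tilted f) ν x ∂(ν.tilted f)
      = log (∫ x, exp (f x) ∂ν) := by
  have : IsProbabilityMeasure (ν.tilted f) := isProbabilityMeasure_tilted hfν
  have h_llr : llr (ν.tilted f) ν =ᵐ[ν.tilted f] fun x ↦ f x - log (∫ x, exp (f x) ∂ν) :=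
    (tilted_absolutelyContinuous ν f).ae_le (log_rnDeriv_tilted_left_self hfν)
  rw [integral_congr_ae h_llr, integral_sub hf (integrable_const _)]
  simp

lemma integrable_tilted_self (hfν : Integrable (fun x ↦ exp (f x)) ν)
    (h : Integrable (fun x ↦ |f x| * exp (f x)) ν) : Integrable f (ν.tilted f) := by
  rw [integrable_tilted_iff hfν]
  have hf : AEMeasurable f ν := aemeasurable_of_aemeasurable_exp hfν.1.aemeasurable
  refine h.mono' (hfν.1.aemeasurable.smul hf).aestronglyMeasurable (ae_of_all _ fun x ↦ ?_)
  simp [mul_comm]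

end MeasureTheory

theorem stmt19_general {α : Type*} [MeasurableSpace α] (P : Measure α) [IsProbabilityMeasure P]
    (f : α → ℝ)
    (h1 : Integrable (fun x => Real.exp (f x)) P)
    (h2 : Integrable (fun x => |f x| * Real.exp (f x)) P) :
    (∀ Q : Measure α, IsProbabilityMeasure Q → Q ≪ P →
        Integrable (fun x => Real.log (Q.rnDeriv P x).toReal) Q →
        Integrable f Q →
        (∫ x, f x ∂Q) - ∫ x, Real.log (Q.rnDeriv P x).toReal ∂Q
          ≤ Real.log (∫ x, Real.exp (f x) ∂P)) ∧
    ((∫ x, f x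
        ∂(P.withDensity fun x =>
            ENNReal.ofReal (Real.exp (f x) / ∫ y, Real.exp (f y) ∂P))) -
      ∫ x, Real.log
          (((P.withDensity fun x =>
              ENNReal.ofReal (Real.exp (f x) / ∫ y, Real.exp (f y) ∂P)).rnDeriv P x).toReal)
        ∂(P.withDensity fun x =>
            ENNReal.ofReal (Real.exp (f x) / ∫ y, Real.exp (f y) ∂P))
        = Real.log (∫ x, Real.exp (f x) ∂P)) :=
  ⟨fun _ _ hQP hllr hfQ ↦ integral_sub_integral_llr_le_log_integral_exp hQP hfQ h1 hllr,
    integral_sub_integral_llr_tilted_self h1 (integrable_tilted_self h1 h2)⟩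

theorem stmt19 {α : Type*} [MeasurableSpace α] (P : Measure α) [IsProbabilityMeasure P]
    (f : α → ℝ) (hf : Measurable f)
    (h1 : Integrable (fun x => Real.exp (f x)) P)
    (h2 : Integrable (fun x => |f x| * Real.exp (f x)) P) :
    (∀ Q : Measure α, IsProbabilityMeasure Q → Q ≪ P →
        Integrable (fun x => Real.log (Q.rnDeriv P x).toReal) Q →
        Integrable f Q →
        (∫ x, f x ∂Q) - ∫ x, Real.log (Q.rnDeriv P x).toReal ∂Q
          ≤ Real.log (∫ x, Real.exp (f x) ∂P)) ∧
    ((∫ x, f x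
        ∂(P.withDensity fun x =>
            ENNReal.ofReal (Real.exp (f x) / ∫ y, Real.exp (f y) ∂P))) -
      ∫ x, Real.log
          (((P.withDensity fun x =>
              ENNReal.ofReal (Real.exp (f x) / ∫ y, Real.exp (f y) ∂P)).rnDeriv P x).toReal)
        ∂(P.withDensity fun x =>
            ENNReal.ofReal (Real.exp (f x) / ∫ y, Real.exp (f y) ∂P))
        = Real.log (∫ x, Real.exp (f x) ∂P)) :=
  stmt19_general P f h1 h2
end
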